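/- For all real numbers h and b, the double integral ∫_{−∞}^{h} ∫_{−∞}^{b} φ(z)[1 − e^{−(b−z)(b−x)}] φ(x) dz dx = Φ(h)Φ(b) − φ(b)[hΦ(h) + φ(h)]. (With b = h_L = h + ω_L this is the discrete-time corrected first-passage probability F(1, h, h_L) = Φ(h)Φ(h_L) − φ(h_L)[hΦ(h) + φ(h)].) -/

import Mathlib

open MeasureTheory Real

/-- The standard normal density. -/
noncomputable def phi (x : ℝ) : ℝ := (Real.sqrt (2 * Real.pi))⁻¹ * Real.exp (-x ^ 2 / 2)

/-- The standard normal cumulative distribution function. -/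
noncomputable def Phi (t : ℝ) : ℝ := ∫ x in Set.Iic t, phi x

open Set Filter

lemma phi_nonneg (x : ℝ) : 0 ≤ phi x := by
  unfold phi
  positivity

lemma integrable_phi : Integrable phi := by
  have : Integrable (fun x : ℝ => Real.exp (-(1/2 : ℝ) * x ^ 2)) :=
    integrable_exp_neg_mul_sq (by norm_num)
  have h2 : phi = fun x => (Real.sqrt (2 * Real.pi))⁻¹ * Real.exp (-(1/2 : ℝ) * x ^ 2) := by
    funext x; unfold phi; ring_nf
  rw [h2]
  exact this.const_mul _

lemma continuous_phi : Continuous phi := by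
  unfold phi
  continuity

lemma hasDerivAt_phi (x : ℝ) : HasDerivAt phi (-x * phi x) x := by
  unfold phi
  have h1 : HasDerivAt (fun y : ℝ => -y ^ 2 / 2) (-x) x := by
    have := ((hasDerivAt_pow 2 x).neg).div_const 2
    refine this.congr_deriv ?_
    simp; ring
  have h2 := (h1.exp).const_mul (Real.sqrt (2 * Real.pi))⁻¹
  refine h2.congr_deriv ?_
  ring

lemma hasDerivAt_Phi (x : ℝ) : HasDerivAt Phi (phi x) x := by
  have key : ∀ y : ℝ, Phi y = Phi 0 + ∫ t in (0:ℝ)..y, phi t := by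
    intro y
    have := intervalIntegral.integral_Iic_sub_Iic
      (integrable_phi.integrableOn (s := Iic (0:ℝ)))
      (integrable_phi.integrableOn (s := Iic y))
    unfold Phi
    linarith [this]
  have : HasDerivAt (fun y => Phi 0 + ∫ t in (0:ℝ)..y, phi t) (phi x) x := by
    have hd : HasDerivAt (fun y => ∫ t in (0:ℝ)..y, phi t) (phi x) x :=
      intervalIntegral.integral_hasDerivAt_right
        integrable_phi.intervalIntegrable
        continuous_phi.aestronglyMeasurable.stronglyMeasurableAtFilter
        continuous_phi.continuousAt
    have hc := (hasDerivAt_const x (Phi 0)).add hd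
    simp only [zero_add] at hc
    exact hc
  exact this.congr_of_eventuallyEq (Filter.Eventually.of_forall fun y => key y)

lemma Phi_nonneg (x : ℝ) : 0 ≤ Phi x :=
  setIntegral_nonneg measurableSet_Iic fun y _ => phi_nonneg y

lemma integrable_phi_mul_exp : Integrable (fun u : ℝ => phi u * Real.exp (-u)) := by
  have hg : Integrable (fun x : ℝ => Real.exp (-(1/2 : ℝ) * x ^ 2)) :=
    integrable_exp_neg_mul_sq (by norm_num)
  have h1 : Integrable (fun x : ℝ => Real.exp (-(1/2 : ℝ) * (x + 1) ^ 2)) :=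
    hg.comp_add_right 1
  have h2 := (h1.const_mul ((Real.sqrt (2 * Real.pi))⁻¹ * Real.exp (1/2 : ℝ)))
  apply h2.congr
  filter_upwards with u
  unfold phi
  rw [mul_assoc, ← Real.exp_add, mul_assoc, ← Real.exp_add]
  ring_nf

noncomputable def K : ℝ := ∫ u : ℝ, phi u * Real.exp (-u)

lemma K_nonneg : 0 ≤ K :=
  integral_nonneg fun u => mul_nonneg (phi_nonneg u) (Real.exp_nonneg _)

lemma Phi_le (x : ℝ) : Phi x ≤ K * Real.exp x := by
  have step1 : Phi x ≤ ∫ u in Iic x, phi u * Real.exp (x - u) := by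
    unfold Phi
    apply setIntegral_mono_on integrable_phi.integrableOn
      (((integrable_phi_mul_exp.const_mul (Real.exp x)).congr (by
        filter_upwards with u
        rw [show x - u = x + -u by ring, Real.exp_add]
        ring)).integrableOn) measurableSet_Iic
    intro u hu
    nth_rewrite 1 [show phi u = phi u * 1 by ring]
    gcongr
    · exact phi_nonneg u
    · exact Real.one_le_exp (by simpa using hu.out)
  have step2 : (∫ u in Iic x, phi u * Real.exp (x - u))
      ≤ ∫ u : ℝ, phi u * Real.exp (x - u) := by
    apply setIntegral_le_integral
    · apply (integrable_phi_mul_exp.const_mul (Real.exp x)).congr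
      filter_upwards with u
      rw [show x - u = x + -u by ring, Real.exp_add]; ring
    · filter_upwards with u
      exact mul_nonneg (phi_nonneg u) (Real.exp_nonneg _)
  have step3 : (∫ u : ℝ, phi u * Real.exp (x - u)) = K * Real.exp x := by
    rw [show K * Real.exp x = Real.exp x * K by ring]
    unfold K
    rw [← integral_const_mul]
    congr 1; funext u
    rw [show x - u = x + -u by ring, Real.exp_add]; ring
  linarith

lemma measurable_Phi : Measurable Phi := by
  apply Monotone.measurable
  intro a c hac
  exact setIntegral_mono_set integrable_phi.integrableOn
    (Filter.Eventually.of_forall phi_nonneg)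
    (HasSubset.Subset.eventuallyLE (Iic_subset_Iic.mpr hac))

lemma integrableOn_Phi (h : ℝ) : IntegrableOn Phi (Iic h) := by
  have hexp : IntegrableOn (fun x : ℝ => K * Real.exp x) (Iic h) :=
    (integrableOn_exp_Iic h).const_mul K
  apply hexp.mono' (measurable_Phi.aestronglyMeasurable.restrict)
  filter_upwards with x
  rw [Real.norm_eq_abs, abs_of_nonneg (Phi_nonneg x)]
  exact Phi_le x

lemma tendsto_phi_atBot : Tendsto phi atBot (nhds 0) := by
  have hp : Tendsto (fun y : ℝ => y ^ 2) atTop atTop := tendsto_pow_atTop two_ne_zero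
  have hsq : Tendsto (fun x : ℝ => x ^ 2) atBot atTop := by
    have := hp.comp tendsto_neg_atBot_atTop
    apply this.congr
    intro x; simp [Function.comp]
  have h1 : Tendsto (fun x : ℝ => -x ^ 2 / 2) atBot atBot := by
    apply Tendsto.atBot_div_const (by norm_num : (0:ℝ) < 2)
    exact tendsto_neg_atTop_atBot.comp hsq
  have h2 := (Real.tendsto_exp_atBot.comp h1).const_mul (Real.sqrt (2 * Real.pi))⁻¹
  rw [mul_zero] at h2
  apply h2.congr
  intro x
  simp [phi, Function.comp]

lemma tendsto_mul_exp_atBot : Tendsto (fun x : ℝ => x * Real.exp x) atBot (nhds 0) := by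
  have h := (tendsto_pow_mul_exp_neg_atTop_nhds_zero 1).comp tendsto_neg_atBot_atTop
  have : Tendsto (fun x : ℝ => -(x * Real.exp x)) atBot (nhds 0) := by
    apply h.congr
    intro x
    simp [Function.comp]
  simpa using this.neg

lemma tendsto_xPhi : Tendsto (fun x : ℝ => x * Phi x + phi x) atBot (nhds 0) := by
  have hx : Tendsto (fun x : ℝ => x * Phi x) atBot (nhds 0) := by
    have hK := tendsto_mul_exp_atBot.const_mul K
    rw [mul_zero] at hK
    apply tendsto_of_tendsto_of_tendsto_of_le_of_le' hK tendsto_const_nhds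
    · filter_upwards [Iic_mem_atBot (0:ℝ)] with x hx
      have h1 : Phi x ≤ K * Real.exp x := Phi_le x
      have h2 : x ≤ 0 := hx
      nlinarith [Phi_nonneg x]
    · filter_upwards [Iic_mem_atBot (0:ℝ)] with x hx
      have h2 : x ≤ 0 := hx
      nlinarith [Phi_nonneg x]
  simpa using hx.add tendsto_phi_atBot

lemma integral_Phi (h : ℝ) : ∫ x in Iic h, Phi x = h * Phi h + phi h := by
  have := integral_Iic_of_hasDerivAt_of_tendsto'
    (f := fun x => x * Phi x + phi x) (f' := Phi) (a := h)
    (fun x _ => by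
      have := ((hasDerivAt_id x).mul (hasDerivAt_Phi x)).add (hasDerivAt_phi x)
      refine this.congr_deriv ?_
      simp only [id_eq]
      ring)
    (integrableOn_Phi h) tendsto_xPhi
  rw [this]; ring

lemma integral_shift (b c : ℝ) : ∫ z in Iic b, phi (z - c) = Phi (b - c) := by
  have h1 : ∫ z in Iic b, phi (z - c)
      = ∫ z, (Iic b).indicator (fun z => phi (z - c)) z := by
    rw [integral_indicator measurableSet_Iic]
  have h2 : ∫ z, (Iic (b - c)).indicator phi z = Phi (b - c) := by
    rw [integral_indicator measurableSet_Iic]; rfl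
  rw [h1, ← h2]
  rw [← integral_sub_right_eq_self (fun z => (Iic (b-c)).indicator phi z) c]
  congr 1
  funext z
  simp only [Set.indicator_apply, Set.mem_Iic, sub_le_sub_iff_right]

lemma pointwise_eq (b x z : ℝ) :
    phi z * (1 - Real.exp (-(b - z) * (b - x))) * phi x
      = Phi b * 0 + (phi z * phi x - phi b * phi (z - (b - x))) := by
  have e1 : Real.exp (-z ^ 2 / 2) * Real.exp (-(b - z) * (b - x)) * Real.exp (-x ^ 2 / 2)
      = Real.exp (-b ^ 2 / 2) * Real.exp (-(z - (b - x)) ^ 2 / 2) := by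
    rw [← Real.exp_add, ← Real.exp_add, ← Real.exp_add]
    congr 1
    ring
  unfold phi
  rw [mul_zero, zero_add]
  linear_combination (-((Real.sqrt (2 * Real.pi))⁻¹ * (Real.sqrt (2 * Real.pi))⁻¹)) * e1

lemma inner_int (b x : ℝ) :
    (∫ z in Iic b, phi z * (1 - Real.exp (-(b - z) * (b - x))) * phi x)
      = Phi b * phi x - phi b * Phi x := by
  have hint1 : IntegrableOn (fun z => phi z * phi x) (Iic b) :=
    (integrable_phi.mul_const (phi x)).integrableOn
  have hint2 : IntegrableOn (fun z => phi b * phi (z - (b - x))) (Iic b) :=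
    ((integrable_phi.comp_sub_right (b - x)).const_mul (phi b)).integrableOn
  calc (∫ z in Iic b, phi z * (1 - Real.exp (-(b - z) * (b - x))) * phi x)
      = ∫ z in Iic b, (phi z * phi x - phi b * phi (z - (b - x))) := by
        refine setIntegral_congr_fun measurableSet_Iic fun z _ => ?_
        have := pointwise_eq b x z
        simpa using this
    _ = (∫ z in Iic b, phi z * phi x) - ∫ z in Iic b, phi b * phi (z - (b - x)) :=
        integral_sub hint1 hint2
    _ = Phi b * phi x - phi b * Phi x := by
        rw [integral_mul_const, integral_const_mul, integral_shift]
        have : b - (b - x) = x := by ring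
        rw [this]
        rfl


/-- For all real `h` and `b`:
`∫_{−∞}^{h} ∫_{−∞}^{b} φ(z)[1 − e^{−(b−z)(b−x)}] φ(x) dz dx = Φ(h)Φ(b) − φ(b)[hΦ(h) + φ(h)]`
(with `b = h_L` this is the discrete-time corrected first-passage probability
`F(1, h, h_L) = Φ(h)Φ(h_L) − φ(h_L)[hΦ(h) + φ(h)]`). -/
theorem double_integral_corrected_F1 (h b : ℝ) :
    (∫ x in Set.Iic h, ∫ z in Set.Iic b,
        phi z * (1 - Real.exp (-(b - z) * (b - x))) * phi x) =
      Phi h * Phi b - phi b * (h * Phi h + phi h) := by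
  calc (∫ x in Set.Iic h, ∫ z in Set.Iic b,
        phi z * (1 - Real.exp (-(b - z) * (b - x))) * phi x)
      = ∫ x in Iic h, (Phi b * phi x - phi b * Phi x) :=
        setIntegral_congr_fun measurableSet_Iic fun x _ => inner_int b x
    _ = (∫ x in Iic h, Phi b * phi x) - ∫ x in Iic h, phi b * Phi x :=
        integral_sub ((integrable_phi.const_mul (Phi b)).integrableOn)
          ((integrableOn_Phi h).const_mul (phi b))
    _ = Phi b * Phi h - phi b * (h * Phi h + phi h) := by
        rw [integral_const_mul, integral_const_mul, integral_Phi]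
        rfl
    _ = Phi h * Phi b - phi b * (h * Phi h + phi h) := by ring
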